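/- (PEVI pessimism.) Let f_0^- ≡ 0, and for k = 1, …, K let f̂_k, b_k : S×A → ℝ with b_k ≥ 0 satisfy the valid-confidence-interval condition |f̂_k(s,a) − (T f_{k−1}^-)(s,a)| ≤ b_k(s,a) for all (s,a), where f_k^- := f̂_k − b_k, and let π_k be a greedy policy with respect to f_k^-. Define the non-stationary Q-functions by Q_0 ≡ 0 and Q_k^{π_{k−1:1}} = T^{π_{k−1}} Q_{k−1}^{π_{k−2:1}} (with Q_1 = R). Then for every k = 1, …, K and every (s,a), f_k^-(s,a) ≤ Q_k^{π_{k−1:1}}(s,a). -/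

import Mathlib

/-!
Induction on `k`. The lower end of the confidence interval gives `f_{k+1}⁻ ≤ T f_k⁻`. Since
`π_k` is greedy for `f_k⁻`, the maximum `max_a f_k⁻(s', a)` is the `π_k`-average of
`f_k⁻(s', ·)`, which by the induction hypothesis is at most the `π_k`-average of `Q_k`; so
`T f_k⁻ ≤ T^{π_k} Q_k = Q_{k+1}`. For `k = 0` every policy is greedy for `f_0⁻ ≡ 0`.
-/

/-- The policy-specific Bellman operator. -/
def bellmanOp {S A : Type*} [Fintype S] [Fintype A] (P : S → A → S → ℝ)
    (R : S → A → ℝ) (γ : ℝ) (pol : S → A → ℝ) (f : S → A → ℝ) : S → A → ℝ :=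
  fun s a => R s a + γ * ∑ s', P s a s' * ∑ a', pol s' a' * f s' a'

/-- The Bellman optimality operator. -/
def bellmanOptOp {S A : Type*} [Fintype S] [Fintype A] [Nonempty A]
    (P : S → A → S → ℝ) (R : S → A → ℝ) (γ : ℝ) (f : S → A → ℝ) : S → A → ℝ :=
  fun s a => R s a + γ * ∑ s',
    P s a s' * Finset.univ.sup' Finset.univ_nonempty (fun a' => f s' a')

/-- Non-stationary Q-functions: `Q_0 ≡ 0` and
`Q_k^{π_{k−1:1}} = T^{π_{k−1}} Q_{k−1}^{π_{k−2:1}}` (so `Q_1 = R`). -/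
def Qns {S A : Type*} [Fintype S] [Fintype A] (P : S → A → S → ℝ)
    (R : S → A → ℝ) (γ : ℝ) (pols : ℕ → S → A → ℝ) : ℕ → S → A → ℝ
  | 0 => fun _ _ => 0
  | (k + 1) => bellmanOp P R γ (pols k) (Qns P R γ pols k)

open Finset

def IsGreedy {S A : Type*} (pol f : S → A → ℝ) : Prop :=
  ∀ s a, 0 < pol s a → ∀ a', f s a' ≤ f s a

section
variable {S A : Type*} [Fintype A] [Nonempty A]

theorem sup'_le_sum_mul_of_isGreedy {pol f g : S → A → ℝ} (hpol0 : ∀ s a, 0 ≤ pol s a)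
    (hpol1 : ∀ s, ∑ a, pol s a = 1) (hgreedy : IsGreedy pol f) (hfg : f ≤ g) (s : S) :
    univ.sup' univ_nonempty (f s) ≤ ∑ a, pol s a * g s a :=
  calc univ.sup' univ_nonempty (f s) = ∑ a, pol s a * univ.sup' univ_nonempty (f s) := by
        rw [← sum_mul, hpol1, one_mul]
    _ ≤ ∑ a, pol s a * f s a := by
        refine sum_le_sum fun a _ => ?_
        rcases (hpol0 s a).eq_or_lt with hzero | hpos
        · simp [← hzero]
        · exact mul_le_mul_of_nonneg_left (sup'_le _ _ fun a' _ => hgreedy s a hpos a') hpos.le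
    _ ≤ ∑ a, pol s a * g s a :=
        sum_le_sum fun a _ => mul_le_mul_of_nonneg_left (hfg s a) (hpol0 s a)

theorem bellmanOptOp_le_bellmanOp [Fintype S] {P : S → A → S → ℝ} {R : S → A → ℝ} {γ : ℝ}
    {pol f g : S → A → ℝ} (hP0 : ∀ s a s', 0 ≤ P s a s') (hγ0 : 0 ≤ γ)
    (h : ∀ s', univ.sup' univ_nonempty (f s') ≤ ∑ a', pol s' a' * g s' a') (s : S) (a : A) :
    bellmanOptOp P R γ f s a ≤ bellmanOp P R γ pol g s a := by
  unfold bellmanOptOp bellmanOp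
  gcongr with s'
  · exact hP0 s a s'
  · exact h s'

end

theorem pevi_pessimism_general {S A : Type*} [Fintype S] [Fintype A] [Nonempty A]
    (P : S → A → S → ℝ) (R : S → A → ℝ) (γ : ℝ)
    (hP0 : ∀ s a s', 0 ≤ P s a s')
    (hγ0 : 0 ≤ γ)
    (K : ℕ)
    (fhat b fminus : ℕ → S → A → ℝ)
    (hf0 : ∀ s a, fminus 0 s a = 0)
    (hfk : ∀ k, 1 ≤ k → k ≤ K → ∀ s a, fminus k s a = fhat k s a - b k s a)
    (hCI : ∀ k, 1 ≤ k → k ≤ K → ∀ s a,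
      |fhat k s a - bellmanOptOp P R γ (fminus (k - 1)) s a| ≤ b k s a)
    (pols : ℕ → S → A → ℝ)
    (hpols0 : ∀ k s a, 0 ≤ pols k s a) (hpols1 : ∀ k s, ∑ a, pols k s a = 1)
    (hgreedy : ∀ k, 1 ≤ k → k ≤ K → ∀ s a, 0 < pols k s a →
      ∀ a', fminus k s a' ≤ fminus k s a) :
    ∀ k, 1 ≤ k → k ≤ K → ∀ s a, fminus k s a ≤ Qns P R γ pols k s a := by
  have greedy : ∀ k ≤ K, IsGreedy (pols k) (fminus k) := by
    rintro (_ | k) hk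
    · intro s a _ a'
      rw [hf0, hf0]
    · exact hgreedy (k + 1) k.succ_pos hk
  have le_bellmanOptOp : ∀ k, k + 1 ≤ K → ∀ s a,
      fminus (k + 1) s a ≤ bellmanOptOp P R γ (fminus k) s a := by
    intro k hk s a
    have hci := hCI (k + 1) k.succ_pos hk s a
    rw [Nat.add_sub_cancel, abs_sub_le_iff] at hci
    rw [hfk (k + 1) k.succ_pos hk]
    linarith [hci.2]
  have pessimism : ∀ k ≤ K, fminus k ≤ Qns P R γ pols k := by
    intro k
    induction k with
    | zero => intro _ s a; simp [hf0, Qns]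
    | succ k ih =>
      intro hk s a
      exact (le_bellmanOptOp k hk s a).trans <| bellmanOptOp_le_bellmanOp hP0 hγ0
        (sup'_le_sum_mul_of_isGreedy (hpols0 k) (hpols1 k) (greedy k (by omega))
          (ih (by omega))) s a
  intro k _ hk s a
  exact pessimism k hk s a

/-- **PEVI pessimism.** With `f_0⁻ ≡ 0`, `f_k⁻ = f̂_k − b_k`, valid confidence
intervals `|f̂_k − T f_{k−1}⁻| ≤ b_k` with `b_k ≥ 0`, and `π_k` greedy w.r.t. `f_k⁻`
(for `k = 1, …, K`), we have `f_k⁻(s,a) ≤ Q_k^{π_{k−1:1}}(s,a)` for all `k = 1, …, K`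
and all `(s,a)`. -/
theorem pevi_pessimism {S A : Type*} [Fintype S] [Fintype A] [Nonempty A]
    (P : S → A → S → ℝ) (R : S → A → ℝ) (Rmax γ : ℝ)
    (hP0 : ∀ s a s', 0 ≤ P s a s') (hP1 : ∀ s a, ∑ s', P s a s' = 1)
    (hR : ∀ s a, 0 ≤ R s a ∧ R s a ≤ Rmax)
    (hγ0 : 0 ≤ γ) (hγ1 : γ < 1)
    (K : ℕ)
    (fhat b fminus : ℕ → S → A → ℝ)
    (hf0 : ∀ s a, fminus 0 s a = 0)
    (hfk : ∀ k, 1 ≤ k → k ≤ K → ∀ s a, fminus k s a = fhat k s a - b k s a)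
    (hb : ∀ k, 1 ≤ k → k ≤ K → ∀ s a, 0 ≤ b k s a)
    (hCI : ∀ k, 1 ≤ k → k ≤ K → ∀ s a,
      |fhat k s a - bellmanOptOp P R γ (fminus (k - 1)) s a| ≤ b k s a)
    (pols : ℕ → S → A → ℝ)
    (hpols0 : ∀ k s a, 0 ≤ pols k s a) (hpols1 : ∀ k s, ∑ a, pols k s a = 1)
    (hgreedy : ∀ k, 1 ≤ k → k ≤ K → ∀ s a, 0 < pols k s a →
      ∀ a', fminus k s a' ≤ fminus k s a) :
    ∀ k, 1 ≤ k → k ≤ K → ∀ s a, fminus k s a ≤ Qns P R γ pols k s a :=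
  pevi_pessimism_general P R γ hP0 hγ0 K fhat b fminus hf0 hfk hCI pols hpols0 hpols1 hgreedy
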